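/- arXiv:1403.7406 — 6 statements merged into one kernel-verified Lean document; each statement's English description precedes it below -/
import Mathlib

section
/- Let λ > 0, δ > 0, and for an integer h ≥ 0 define the increment kernel G_h : ℝ → ℝ by G_h(v) = ∫_{max(v, hδ)}^{(h+1)δ} e^{−λ(s−v)} ds for v ≤ (h+1)δ and G_h(v) = 0 for v > (h+1)δ. Then: (i) ∫_ℝ G_0(v)² dv = (e^{−λδ} + λδ − 1)/λ³; and (ii) for every integer h ≥ 1, ∫_ℝ G_0(v) G_h(v) dv = (e^{−λδ} − 1)² e^{−λ(h−1)δ} / (2λ³). Consequently, multiplying by Var L(1) = ρμ^κ gives the autocovariance function of the increments ΔY of the integrated OU process: C_{ΔY}(0) = (ρμ^κ/λ³)(e^{−λδ} + λδ − 1) and C_{ΔY}(h) = (ρμ^κ/(2λ³))(e^{−λδ} − 1)² e^{−λ(h−1)δ} for h ≥ 1. -/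
/-!
On `(-∞, hδ]` the kernel `G_h` is a multiple of `e^{λv}`, on `[hδ, (h+1)δ]` it is an affine
function of `e^{λv}`, and it vanishes beyond. Since `G_0` vanishes beyond `δ` and, for `h ≥ 1`,
`G_h` is a multiple of `e^{λv}` on `(-∞, δ]`, both `G_0²` and `G_0 G_h` are multiples of
`e^{2λv}` on `(-∞, 0]` and quadratic polynomials in `e^{λv}` on `[0, δ]`, which integrate in
closed form.
-/

open MeasureTheory

/-- The increment kernel of the integrated Ornstein–Uhlenbeck process:
`G_h(v) = ∫_{max(v, hδ)}^{(h+1)δ} e^{−λ(s−v)} ds` for `v ≤ (h+1)δ`, and `0` otherwise. -/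
noncomputable def ouIncrementKernel (lam δ : ℝ) (h : ℕ) (v : ℝ) : ℝ :=
  if v ≤ ((h : ℝ) + 1) * δ then
    ∫ s in max v ((h : ℝ) * δ)..((h : ℝ) + 1) * δ, Real.exp (-lam * (s - v))
  else 0

open Set Real

theorem integral_eq_setIntegral_Iic_add_intervalIntegral {f g p : ℝ → ℝ} {a b : ℝ}
    (hab : a ≤ b) (hg : IntegrableOn g (Iic a)) (hp : IntervalIntegrable p volume a b)
    (hfg : EqOn f g (Iic a)) (hfp : EqOn f p (Icc a b)) (hf : ∀ x, b < x → f x = 0) :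
    ∫ x, f x = (∫ x in Iic a, g x) + ∫ x in a..b, p x := by
  have hfp' : EqOn f p (Ioc a b) := hfp.mono Ioc_subset_Icc_self
  have hfa : IntegrableOn f (Iic a) := hg.congr_fun hfg.symm measurableSet_Iic
  have hfab : IntegrableOn f (Ioc a b) :=
    ((intervalIntegrable_iff_integrableOn_Ioc_of_le hab).1 hp).congr_fun hfp'.symm
      measurableSet_Ioc
  rw [← setIntegral_eq_integral_of_forall_compl_eq_zero (s := Iic b)
      fun x hx => hf x (not_le.1 hx), ← Iic_union_Ioc_eq_Iic hab,
    setIntegral_union (Iic_disjoint_Ioc le_rfl) measurableSet_Ioc hfa hfab,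
    setIntegral_congr_fun measurableSet_Iic hfg, setIntegral_congr_fun measurableSet_Ioc hfp',
    intervalIntegral.integral_of_le hab]

theorem integral_exp_mul {c : ℝ} (hc : c ≠ 0) (a b : ℝ) :
    ∫ x in a..b, exp (c * x) = (exp (c * b) - exp (c * a)) / c := by
  rw [intervalIntegral.integral_comp_mul_left (fun x => exp x) hc, integral_exp, smul_eq_mul,
    inv_mul_eq_div]

theorem integral_quadratic_exp_mul {c : ℝ} (hc : c ≠ 0) (α β γ a b : ℝ) :
    ∫ x in a..b, (α + β * exp (c * x) + γ * exp (c * x) ^ 2) =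
      α * (b - a) + β * (exp (c * b) - exp (c * a)) / c
        + γ * (exp (c * b) ^ 2 - exp (c * a) ^ 2) / (2 * c) := by
  have hderiv (x : ℝ) : HasDerivAt
      (fun x => α * x + β * exp (c * x) / c + γ * exp (c * x) ^ 2 / (2 * c))
      (α + β * exp (c * x) + γ * exp (c * x) ^ 2) x := by
    have hexp : HasDerivAt (fun x => exp (c * x)) (exp (c * x) * c) x := by
      simpa using ((hasDerivAt_id x).const_mul c).exp
    refine ((((hasDerivAt_id x).const_mul α).add ((hexp.const_mul β).div_const c)).add
      (((hexp.pow 2).const_mul γ).div_const (2 * c))).congr_deriv ?_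
    field_simp
    ring
  rw [intervalIntegral.integral_eq_sub_of_hasDerivAt (fun x _ => hderiv x)
    (Continuous.intervalIntegrable (by fun_prop) a b)]
  ring

theorem exp_mul_sq (c x : ℝ) : exp (c * x) ^ 2 = exp (2 * c * x) := by
  rw [sq, ← exp_add]
  ring_nf

theorem integrableOn_exp_mul_sq_Iic {c : ℝ} (hc : 0 < c) (a : ℝ) :
    IntegrableOn (fun x => exp (c * x) ^ 2) (Iic a) := by
  simpa only [exp_mul_sq] using integrableOn_exp_mul_Iic (by positivity : 0 < 2 * c) a

theorem integral_exp_mul_sq_Iic {c : ℝ} (hc : 0 < c) (a : ℝ) :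
    ∫ x in Iic a, exp (c * x) ^ 2 = exp (c * a) ^ 2 / (2 * c) := by
  simpa only [exp_mul_sq] using integral_exp_mul_Iic (by positivity : 0 < 2 * c) a

theorem integral_exp_neg_mul_sub {lam : ℝ} (hlam : lam ≠ 0) (v a b : ℝ) :
    ∫ s in a..b, exp (-lam * (s - v)) =
      exp (lam * v) * (exp (-lam * a) - exp (-lam * b)) / lam := by
  have hsplit : (fun s => exp (-lam * (s - v))) = fun s => exp (lam * v) * exp (-lam * s) := by
    ext s
    rw [← exp_add]
    ring_nf
  rw [hsplit, intervalIntegral.integral_const_mul, integral_exp_mul (neg_ne_zero.2 hlam)]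
  field_simp
  ring

section ouIncrementKernel

variable {lam δ v : ℝ} {h : ℕ}

theorem ouIncrementKernel_of_le (hlam : lam ≠ 0) (hδ : 0 ≤ δ) (hv : v ≤ h * δ) :
    ouIncrementKernel lam δ h v =
      exp (-lam * h * δ) * (1 - exp (-lam * δ)) / lam * exp (lam * v) := by
  rw [ouIncrementKernel, if_pos (by nlinarith), max_eq_right hv, integral_exp_neg_mul_sub hlam,
    show -lam * ((h + 1) * δ) = -lam * h * δ + -lam * δ by ring, exp_add, ← mul_assoc]
  ring

theorem ouIncrementKernel_of_mem_Icc (hlam : lam ≠ 0) (hv : v ∈ Icc (h * δ) ((h + 1) * δ)) :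
    ouIncrementKernel lam δ h v = 1 / lam - exp (-lam * ((h + 1) * δ)) / lam * exp (lam * v) := by
  rw [ouIncrementKernel, if_pos hv.2, max_eq_left hv.1, integral_exp_neg_mul_sub hlam, mul_sub,
    ← exp_add, show lam * v + -lam * v = 0 by ring, exp_zero]
  ring

theorem ouIncrementKernel_of_lt (hv : (h + 1) * δ < v) : ouIncrementKernel lam δ h v = 0 :=
  if_neg hv.not_ge

end ouIncrementKernel

section integrals

variable {lam δ : ℝ}

theorem integral_ouIncrementKernel_zero_sq (hlam : 0 < lam) (hδ : 0 < δ) :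
    ∫ v, ouIncrementKernel lam δ 0 v ^ 2 = (exp (-lam * δ) + lam * δ - 1) / lam ^ 3 := by
  set q := exp (-lam * δ) with hq
  have hleft : EqOn (fun v => ouIncrementKernel lam δ 0 v ^ 2)
      (fun v => ((1 - q) / lam) ^ 2 * exp (lam * v) ^ 2) (Iic 0) := fun v hv => by
    simp only [ouIncrementKernel_of_le (h := 0) hlam.ne' hδ.le (by simpa using hv), Nat.cast_zero,
      mul_zero, zero_mul, exp_zero]
    ring
  have hmid : EqOn (fun v => ouIncrementKernel lam δ 0 v ^ 2)
      (fun v => 1 / lam ^ 2 + -(2 * q / lam ^ 2) * exp (lam * v)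
        + q ^ 2 / lam ^ 2 * exp (lam * v) ^ 2)
      (Icc 0 δ) := fun v hv => by
    simp only [ouIncrementKernel_of_mem_Icc (h := 0) hlam.ne' (by simpa using hv), Nat.cast_zero,
      zero_add, one_mul]
    ring
  rw [integral_eq_setIntegral_Iic_add_intervalIntegral hδ.le
      ((integrableOn_exp_mul_sq_Iic hlam 0).const_mul _)
      (Continuous.intervalIntegrable (by fun_prop) _ _) hleft hmid
      fun v hv => by simp [ouIncrementKernel_of_lt (h := 0) (by simpa using hv)],
    integral_const_mul, integral_exp_mul_sq_Iic hlam, integral_quadratic_exp_mul hlam.ne', hq,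
    mul_zero, exp_zero, neg_mul, exp_neg]
  field_simp
  ring

theorem integral_ouIncrementKernel_zero_mul (hlam : 0 < lam) (hδ : 0 < δ) {h : ℕ}
    (hh : 1 ≤ h) :
    ∫ v, ouIncrementKernel lam δ 0 v * ouIncrementKernel lam δ h v
      = (exp (-lam * δ) - 1) ^ 2 * exp (-lam * (h - 1) * δ) / (2 * lam ^ 3) := by
  set q := exp (-lam * δ) with hq
  set K := exp (-lam * h * δ) * (1 - q) / lam with hK
  have hGh {v : ℝ} (hv : v ≤ δ) : ouIncrementKernel lam δ h v = K * exp (lam * v) :=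
    ouIncrementKernel_of_le hlam.ne' hδ.le (hv.trans (le_mul_of_one_le_left hδ.le (mod_cast hh)))
  have hleft : EqOn (fun v => ouIncrementKernel lam δ 0 v * ouIncrementKernel lam δ h v)
      (fun v => (1 - q) / lam * K * exp (lam * v) ^ 2) (Iic 0) := fun v hv => by
    simp only [ouIncrementKernel_of_le (h := 0) hlam.ne' hδ.le (by simpa using hv),
      hGh (hv.trans hδ.le), Nat.cast_zero, mul_zero, zero_mul, exp_zero]
    ring
  have hmid : EqOn (fun v => ouIncrementKernel lam δ 0 v * ouIncrementKernel lam δ h v)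
      (fun v => 0 + K / lam * exp (lam * v) + -(q * K / lam) * exp (lam * v) ^ 2)
      (Icc 0 δ) := fun v hv => by
    simp only [ouIncrementKernel_of_mem_Icc (h := 0) hlam.ne' (by simpa using hv), hGh hv.2,
      Nat.cast_zero, zero_add, one_mul]
    ring
  rw [integral_eq_setIntegral_Iic_add_intervalIntegral hδ.le
      ((integrableOn_exp_mul_sq_Iic hlam 0).const_mul _)
      (Continuous.intervalIntegrable (by fun_prop) _ _) hleft hmid
      fun v hv => by simp [ouIncrementKernel_of_lt (h := 0) (by simpa using hv)],
    integral_const_mul, integral_exp_mul_sq_Iic hlam, integral_quadratic_exp_mul hlam.ne', hK, hq,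
    show -lam * (h - 1) * δ = -lam * h * δ + lam * δ by ring, exp_add, mul_zero, exp_zero,
    neg_mul, exp_neg]
  field_simp
  ring

end integrals

theorem integrated_OU_autocovariance_general (lam δ μ ρ κ : ℝ) (hlam : 0 < lam) (hδ : 0 < δ) :
    ((∫ v : ℝ, (ouIncrementKernel lam δ 0 v) ^ 2)
        = (Real.exp (-lam * δ) + lam * δ - 1) / lam ^ 3)
    ∧ (∀ h : ℕ, 1 ≤ h →
        (∫ v : ℝ, ouIncrementKernel lam δ 0 v * ouIncrementKernel lam δ h v)
          = (Real.exp (-lam * δ) - 1) ^ 2 * Real.exp (-lam * ((h : ℝ) - 1) * δ)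
              / (2 * lam ^ 3))
    ∧ ((ρ * μ ^ κ) * ∫ v : ℝ, (ouIncrementKernel lam δ 0 v) ^ 2
        = (ρ * μ ^ κ / lam ^ 3) * (Real.exp (-lam * δ) + lam * δ - 1))
    ∧ (∀ h : ℕ, 1 ≤ h →
        (ρ * μ ^ κ) * ∫ v : ℝ, ouIncrementKernel lam δ 0 v * ouIncrementKernel lam δ h v
          = (ρ * μ ^ κ / (2 * lam ^ 3)) * (Real.exp (-lam * δ) - 1) ^ 2
              * Real.exp (-lam * ((h : ℝ) - 1) * δ)) := by
  refine ⟨integral_ouIncrementKernel_zero_sq hlam hδ,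
    fun h hh => integral_ouIncrementKernel_zero_mul hlam hδ hh, ?_, fun h hh => ?_⟩
  · rw [integral_ouIncrementKernel_zero_sq hlam hδ]
    ring
  · rw [integral_ouIncrementKernel_zero_mul hlam hδ hh]
    ring

/-- Autocovariance of the increments `ΔY` of the integrated OU process driven by a
Lévy subordinator with `Var L(1) = ρ μ^κ`:
(i) `∫ G₀² = (e^{−λδ} + λδ − 1)/λ³`,
(ii) `∫ G₀ G_h = (e^{−λδ} − 1)² e^{−λ(h−1)δ}/(2λ³)` for `h ≥ 1`, and consequently
`C_ΔY(0) = (ρμ^κ/λ³)(e^{−λδ} + λδ − 1)` and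
`C_ΔY(h) = (ρμ^κ/(2λ³))(e^{−λδ} − 1)² e^{−λ(h−1)δ}` for `h ≥ 1`. -/
theorem integrated_OU_autocovariance (lam δ μ ρ κ : ℝ) (hlam : 0 < lam) (hδ : 0 < δ)
    (hμ : 0 < μ) (hρ : 0 < ρ) :
    ((∫ v : ℝ, (ouIncrementKernel lam δ 0 v) ^ 2)
        = (Real.exp (-lam * δ) + lam * δ - 1) / lam ^ 3)
    ∧ (∀ h : ℕ, 1 ≤ h →
        (∫ v : ℝ, ouIncrementKernel lam δ 0 v * ouIncrementKernel lam δ h v)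
          = (Real.exp (-lam * δ) - 1) ^ 2 * Real.exp (-lam * ((h : ℝ) - 1) * δ)
              / (2 * lam ^ 3))
    ∧ ((ρ * μ ^ κ) * ∫ v : ℝ, (ouIncrementKernel lam δ 0 v) ^ 2
        = (ρ * μ ^ κ / lam ^ 3) * (Real.exp (-lam * δ) + lam * δ - 1))
    ∧ (∀ h : ℕ, 1 ≤ h →
        (ρ * μ ^ κ) * ∫ v : ℝ, ouIncrementKernel lam δ 0 v * ouIncrementKernel lam δ h v
          = (ρ * μ ^ κ / (2 * lam ^ 3)) * (Real.exp (-lam * δ) - 1) ^ 2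
              * Real.exp (-lam * ((h : ℝ) - 1) * δ)) :=
  integrated_OU_autocovariance_general lam δ μ ρ κ hlam hδ
end

section
/- Let p ≥ 1, let λ_1, …, λ_p be distinct positive reals, let w_1, …, w_p be real weights, let δ > 0, and set h(s) = Σ_{k=1}^p w_k e^{−λ_k s}. Define the increment kernel G₀ : ℝ → ℝ by G₀(v) = ∫_{max(v,0)}^{δ} h(s−v) ds for v ≤ δ and G₀(v) = 0 for v > δ. Then ∫_ℝ G₀(v)² dv = Σ_{i=1}^p 2 β_i λ_i^{−2} (e^{−λ_i δ} − 1 + λ_i δ), where β_i = w_i Σ_{j=1}^p w_j/(λ_i + λ_j). Consequently the variance of the increments ΔY of the integrated CARMA process equals Var L(1) times this quantity. -/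
/-! The increment kernel is linear in the weights, `G₀ = Σ_k w_k g_{λ_k}` with `g_a` the kernel of
the single exponential `e^{-as}`, so `∫ G₀² = Σ_{i,j} w_i w_j ∫ g_{λ_i} g_{λ_j}`. Explicitly
`g_a(v) = (1 - e^{-aδ}) e^{av} / a` for `v ≤ 0`, `g_a(v) = (1 - e^{a(v-δ)}) / a` on `(0, δ]` and
`g_a = 0` beyond `δ`; integrating the product piece by piece gives
`∫ g_a g_b = (φ(a) + φ(b)) / (a + b)` with `φ(a) = (e^{-aδ} - 1 + aδ) / a²`. Symmetrising the
double sum turns `φ(λ_i) + φ(λ_j)` into `2 φ(λ_i)`, which produces `β_i = w_i Σ_j w_j / (λ_i + λ_j)`.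
-/

open MeasureTheory

/-- The increment kernel of the integrated CARMA-type mixture process with kernel
`h(s) = Σ_k w_k e^{−λ_k s}`:
`G_h(v) = ∫_{max(v, hδ)}^{(h+1)δ} h(s−v) ds` for `v ≤ (h+1)δ`, and `0` otherwise. -/
noncomputable def carmaIncrementKernel {p : ℕ} (lam w : Fin p → ℝ) (δ : ℝ) (h : ℕ)
    (v : ℝ) : ℝ :=
  if v ≤ ((h : ℝ) + 1) * δ then
    ∫ s in max v ((h : ℝ) * δ)..((h : ℝ) + 1) * δ,
      ∑ k : Fin p, w k * Real.exp (-lam k * (s - v))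
  else 0

open Real Set

theorem integral_sq_sum_mul {α ι : Type*} [MeasurableSpace α] {μ : Measure α} [Fintype ι]
    (w : ι → ℝ) (f : ι → α → ℝ) (hf : ∀ i j, Integrable (fun x => f i x * f j x) μ) :
    ∫ x, (∑ i, w i * f i x) ^ 2 ∂μ = ∑ i, ∑ j, w i * w j * ∫ x, f i x * f j x ∂μ := by
  have hexpand : ∀ x, (∑ i, w i * f i x) ^ 2 = ∑ i, ∑ j, w i * w j * (f i x * f j x) := by
    intro x
    rw [sq, Finset.sum_mul_sum]
    exact Finset.sum_congr rfl fun i _ => Finset.sum_congr rfl fun j _ => by ring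
  simp_rw [hexpand]
  rw [integral_finsetSum _ fun i _ => integrable_finsetSum _ fun j _ => (hf i j).const_mul _]
  refine Finset.sum_congr rfl fun i _ => ?_
  rw [integral_finsetSum _ fun j _ => (hf i j).const_mul _]
  simp_rw [integral_const_mul]

theorem sum_sum_mul_add_eq_two_mul {ι R : Type*} [Fintype ι] [CommSemiring R]
    (c : ι → ι → R) (hc : ∀ i j, c i j = c j i) (φ : ι → R) :
    ∑ i, ∑ j, c i j * (φ i + φ j) = 2 * ∑ i, ∑ j, c i j * φ i := by
  have hswap : ∑ i, ∑ j, c i j * φ j = ∑ i, ∑ j, c i j * φ i := by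
    rw [Finset.sum_comm]
    simp_rw [hc]
  simp_rw [mul_add, Finset.sum_add_distrib, hswap, two_mul]

theorem intervalIntegral_exp_neg_mul_sub {a : ℝ} (ha : a ≠ 0) (c d v : ℝ) :
    ∫ s in c..d, exp (-a * (s - v)) = (exp (-a * (c - v)) - exp (-a * (d - v))) / a := by
  have hrw : ∀ s, -a * (s - v) = a * v - a * s := fun s => by ring
  simp_rw [hrw]
  rw [intervalIntegral.integral_comp_sub_mul _ ha, integral_exp, smul_eq_mul]
  field_simp

theorem intervalIntegral_one_sub_exp_mul_one_sub_exp {a b : ℝ} (ha : a ≠ 0) (hb : b ≠ 0)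
    (hab : a + b ≠ 0) (δ : ℝ) :
    ∫ v in 0..δ, (1 - exp (a * (v - δ))) * (1 - exp (b * (v - δ)))
      = δ - (1 - exp (-a * δ)) / a - (1 - exp (-b * δ)) / b
        + (1 - exp (-(a + b) * δ)) / (a + b) := by
  have hderiv : ∀ c v : ℝ, HasDerivAt (fun v => exp (c * (v - δ))) (c * exp (c * (v - δ))) v :=
    fun c v => by
      simpa [mul_comm] using ((((hasDerivAt_id v).sub_const δ).const_mul c).exp)
  have hprim : ∀ v : ℝ, HasDerivAt
      (fun v => v - exp (a * (v - δ)) / a - exp (b * (v - δ)) / b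
        + exp ((a + b) * (v - δ)) / (a + b))
      ((1 - exp (a * (v - δ))) * (1 - exp (b * (v - δ)))) v := by
    intro v
    refine (((((hasDerivAt_id v).sub ((hderiv a v).div_const a)).sub
      ((hderiv b v).div_const b)).add ((hderiv (a + b) v).div_const (a + b)))).congr_deriv ?_
    rw [show (a + b) * (v - δ) = a * (v - δ) + b * (v - δ) by ring, exp_add]
    field_simp
    ring
  rw [intervalIntegral.integral_eq_sub_of_hasDerivAt (fun v _ => hprim v)
    ((by fun_prop : Continuous fun v : ℝ =>
      (1 - exp (a * (v - δ))) * (1 - exp (b * (v - δ)))).intervalIntegrable _ _)]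
  simp only [sub_self, mul_zero, exp_zero, zero_sub, mul_neg, neg_mul]
  ring

noncomputable def expIncrementKernel (a δ v : ℝ) : ℝ :=
  if v ≤ δ then ∫ s in max v 0..δ, exp (-a * (s - v)) else 0

section expIncrementKernel

variable {a b δ v : ℝ}

theorem expIncrementKernel_of_nonpos (ha : a ≠ 0) (hδ : 0 ≤ δ) (hv : v ≤ 0) :
    expIncrementKernel a δ v = (1 - exp (-a * δ)) / a * exp (a * v) := by
  rw [expIncrementKernel, if_pos (hv.trans hδ), max_eq_right hv,
    intervalIntegral_exp_neg_mul_sub ha, div_mul_eq_mul_div, sub_mul, ← exp_add]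
  ring_nf

theorem expIncrementKernel_of_mem_Ioc (ha : a ≠ 0) (hv : v ∈ Ioc 0 δ) :
    expIncrementKernel a δ v = (1 - exp (a * (v - δ))) / a := by
  rw [expIncrementKernel, if_pos hv.2, max_eq_left hv.1.le,
    intervalIntegral_exp_neg_mul_sub ha, sub_self, mul_zero, exp_zero]
  ring_nf

theorem expIncrementKernel_of_lt (hv : δ < v) : expIncrementKernel a δ v = 0 :=
  if_neg hv.not_ge

theorem expIncrementKernel_mul_eqOn_Iic (ha : a ≠ 0) (hb : b ≠ 0) (hδ : 0 ≤ δ) :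
    EqOn (fun v => expIncrementKernel a δ v * expIncrementKernel b δ v)
      (fun v => (1 - exp (-a * δ)) / a * ((1 - exp (-b * δ)) / b) * exp ((a + b) * v))
      (Iic 0) := by
  intro v hv
  simp only [expIncrementKernel_of_nonpos ha hδ hv, expIncrementKernel_of_nonpos hb hδ hv,
    add_mul, exp_add]
  ring

theorem expIncrementKernel_mul_eqOn_Ioc (ha : a ≠ 0) (hb : b ≠ 0) :
    EqOn (fun v => expIncrementKernel a δ v * expIncrementKernel b δ v)
      (fun v => (1 - exp (a * (v - δ))) * (1 - exp (b * (v - δ))) / (a * b)) (Ioc 0 δ) := by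
  intro v hv
  simp only [expIncrementKernel_of_mem_Ioc ha hv, expIncrementKernel_of_mem_Ioc hb hv]
  ring

theorem integrable_expIncrementKernel_mul (ha : 0 < a) (hb : 0 < b) (hδ : 0 ≤ δ) :
    Integrable (fun v => expIncrementKernel a δ v * expIncrementKernel b δ v) := by
  rw [← integrableOn_iff_integrable_of_support_subset (s := Iic δ)
    fun v hv => mem_Iic.mpr <| not_lt.mp fun hlt => hv (by simp [expIncrementKernel_of_lt hlt])]
  rw [← Iic_union_Ioc_eq_Iic hδ, integrableOn_union]
  constructor
  · refine (integrableOn_congr_fun (expIncrementKernel_mul_eqOn_Iic ha.ne' hb.ne' hδ)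
      measurableSet_Iic).mpr ?_
    exact (integrableOn_exp_mul_Iic (add_pos ha hb) 0).const_mul _
  · refine (integrableOn_congr_fun (expIncrementKernel_mul_eqOn_Ioc ha.ne' hb.ne')
      measurableSet_Ioc).mpr ?_
    exact Continuous.integrableOn_Ioc (by fun_prop)

theorem integral_expIncrementKernel_mul (ha : 0 < a) (hb : 0 < b) (hδ : 0 ≤ δ) :
    ∫ v, expIncrementKernel a δ v * expIncrementKernel b δ v
      = ((exp (-a * δ) - 1 + a * δ) / a ^ 2 + (exp (-b * δ) - 1 + b * δ) / b ^ 2) / (a + b) := by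
  have hab : 0 < a + b := add_pos ha hb
  have hint := (integrable_expIncrementKernel_mul ha hb hδ).integrableOn (s := Iic δ)
  rw [← Iic_union_Ioc_eq_Iic hδ, integrableOn_union] at hint
  have hIic : ∫ v in Iic 0, expIncrementKernel a δ v * expIncrementKernel b δ v
      = (1 - exp (-a * δ)) / a * ((1 - exp (-b * δ)) / b) / (a + b) := by
    rw [setIntegral_congr_fun measurableSet_Iic (expIncrementKernel_mul_eqOn_Iic ha.ne' hb.ne' hδ),
      integral_const_mul, integral_exp_mul_Iic hab, mul_zero, exp_zero, mul_one_div]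
  have hIoc : ∫ v in Ioc 0 δ, expIncrementKernel a δ v * expIncrementKernel b δ v
      = (δ - (1 - exp (-a * δ)) / a - (1 - exp (-b * δ)) / b
          + (1 - exp (-(a + b) * δ)) / (a + b)) / (a * b) := by
    rw [setIntegral_congr_fun measurableSet_Ioc (expIncrementKernel_mul_eqOn_Ioc ha.ne' hb.ne'),
      ← intervalIntegral.integral_of_le hδ, intervalIntegral.integral_div,
      intervalIntegral_one_sub_exp_mul_one_sub_exp ha.ne' hb.ne' hab.ne']
  rw [← setIntegral_eq_integral_of_forall_compl_eq_zero (s := Iic δ)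
      fun v hv => by simp [expIncrementKernel_of_lt (not_le.mp hv)],
    ← Iic_union_Ioc_eq_Iic hδ, setIntegral_union (Iic_disjoint_Ioc le_rfl) measurableSet_Ioc
      hint.1 hint.2, hIic, hIoc,
    show -(a + b) * δ = -a * δ + -b * δ by ring, exp_add]
  field_simp
  ring

end expIncrementKernel

theorem carmaIncrementKernel_zero_eq_sum {p : ℕ} (lam w : Fin p → ℝ) (δ v : ℝ) :
    carmaIncrementKernel lam w δ 0 v = ∑ k, w k * expIncrementKernel (lam k) δ v := by
  unfold carmaIncrementKernel expIncrementKernel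
  simp only [Nat.cast_zero, zero_add, one_mul, zero_mul]
  split_ifs
  · rw [intervalIntegral.integral_finsetSum fun k _ =>
      (by fun_prop : Continuous fun s => w k * exp (-lam k * (s - v))).intervalIntegrable _ _]
    simp_rw [intervalIntegral.integral_const_mul]
  · simp

theorem integrated_CARMA_variance_general (p : ℕ) (lam w : Fin p → ℝ)
    (hpos : ∀ i, 0 < lam i) (δ : ℝ) (hδ : 0 < δ)
    (varL1 : ℝ) :
    ((∫ v : ℝ, (carmaIncrementKernel lam w δ 0 v) ^ 2)
        = ∑ i : Fin p, 2 * (w i * ∑ j : Fin p, w j / (lam i + lam j)) * (lam i) ^ (-2 : ℤ)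
            * (Real.exp (-lam i * δ) - 1 + lam i * δ))
    ∧ (varL1 * ∫ v : ℝ, (carmaIncrementKernel lam w δ 0 v) ^ 2
        = varL1 * ∑ i : Fin p, 2 * (w i * ∑ j : Fin p, w j / (lam i + lam j))
            * (lam i) ^ (-2 : ℤ) * (Real.exp (-lam i * δ) - 1 + lam i * δ)) := by
  set φ : Fin p → ℝ := fun i => (exp (-lam i * δ) - 1 + lam i * δ) / lam i ^ 2
  have hvar : ∫ v, (carmaIncrementKernel lam w δ 0 v) ^ 2
      = ∑ i, 2 * (w i * ∑ j, w j / (lam i + lam j)) * lam i ^ (-2 : ℤ)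
          * (exp (-lam i * δ) - 1 + lam i * δ) := calc
    _ = ∑ i, ∑ j, w i * w j * ((φ i + φ j) / (lam i + lam j)) := by
      simp_rw [carmaIncrementKernel_zero_eq_sum, integral_sq_sum_mul w _
        fun i j => integrable_expIncrementKernel_mul (hpos i) (hpos j) hδ.le,
        integral_expIncrementKernel_mul (hpos _) (hpos _) hδ.le]
      rfl
    _ = 2 * ∑ i, ∑ j, w i * w j / (lam i + lam j) * φ i := by
      rw [← sum_sum_mul_add_eq_two_mul _ (fun i j => by rw [mul_comm (w i), add_comm]) φ]
      refine Finset.sum_congr rfl fun i _ => Finset.sum_congr rfl fun j _ => ?_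
      ring
    _ = _ := by
      simp_rw [Finset.mul_sum, Finset.sum_mul, zpow_neg, zpow_ofNat, φ]
      refine Finset.sum_congr rfl fun i _ => Finset.sum_congr rfl fun j _ => ?_
      ring
  exact ⟨hvar, by rw [hvar]⟩

/-- Variance of the increments of the integrated CARMA process: with distinct positive
rates `λ_i`, weights `w_i`, and `β_i = w_i Σ_j w_j/(λ_i + λ_j)`, the increment kernel
`G₀` satisfies `∫ G₀² = Σ_i 2 β_i λ_i^{−2} (e^{−λ_i δ} − 1 + λ_i δ)`; consequently
`Var(ΔY) = Var L(1)` times this quantity. -/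
theorem integrated_CARMA_variance (p : ℕ) (hp : 1 ≤ p) (lam w : Fin p → ℝ)
    (hpos : ∀ i, 0 < lam i) (hdist : Function.Injective lam) (δ : ℝ) (hδ : 0 < δ)
    (varL1 : ℝ) :
    ((∫ v : ℝ, (carmaIncrementKernel lam w δ 0 v) ^ 2)
        = ∑ i : Fin p, 2 * (w i * ∑ j : Fin p, w j / (lam i + lam j)) * (lam i) ^ (-2 : ℤ)
            * (Real.exp (-lam i * δ) - 1 + lam i * δ))
    ∧ (varL1 * ∫ v : ℝ, (carmaIncrementKernel lam w δ 0 v) ^ 2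
        = varL1 * ∑ i : Fin p, 2 * (w i * ∑ j : Fin p, w j / (lam i + lam j))
            * (lam i) ^ (-2 : ℤ) * (Real.exp (-lam i * δ) - 1 + lam i * δ)) :=
  integrated_CARMA_variance_general p lam w hpos δ hδ varL1
end

section
/- Let p ≥ 1, let λ_1, …, λ_p be distinct positive reals, let w_1, …, w_p be real weights, let δ > 0, and set h(s) = Σ_{k=1}^p w_k e^{−λ_k s}. For an integer h ≥ 0 define the increment kernel G_h : ℝ → ℝ by G_h(v) = ∫_{max(v, hδ)}^{(h+1)δ} h(s−v) ds for v ≤ (h+1)δ and G_h(v) = 0 for v > (h+1)δ. Then for every integer h ≥ 1, ∫_ℝ G₀(v) G_h(v) dv = Σ_{i=1}^p β_i λ_i^{−2} (e^{−λ_i δ} − 1)² e^{−λ_i (h−1)δ}, where β_i = w_i Σ_{j=1}^p w_j/(λ_i + λ_j). Consequently the lag-h autocovariance of the increments ΔY of the integrated CARMA process equals Var L(1) times this quantity. -/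
open MeasureTheory Set Real

lemma expInt (μ a b : ℝ) (hμ : μ ≠ 0) :
    ∫ v in a..b, Real.exp (μ * v) = (Real.exp (μ * b) - Real.exp (μ * a)) / μ := by
  have H : ∀ s : ℝ, HasDerivAt (fun v => Real.exp (μ * v) / μ) (Real.exp (μ * s)) s := by
    intro s
    have h1 : HasDerivAt (fun v : ℝ => μ * v) μ s := by
      simpa using (hasDerivAt_id s).const_mul μ
    have := (h1.exp).div_const μ
    simpa [mul_comm, mul_div_assoc, mul_div_cancel_left₀ _ hμ] using this
  have := intervalIntegral.integral_eq_sub_of_hasDerivAt (fun s _ => H s)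
    ((Real.continuous_exp.comp (continuous_const.mul continuous_id)).intervalIntegrable a b)
  rw [this]; ring

lemma expIntegrable_Iic (μ a : ℝ) (hμ : 0 < μ) :
    IntegrableOn (fun v => Real.exp (μ * v)) (Iic a) := by
  apply (integrable_indicator_iff measurableSet_Iic).1
  have : (Iic a).indicator (fun v => Real.exp (μ * v))
      = fun v => (Iic (μ * a)).indicator Real.exp (μ * v) := by
    ext v
    by_cases h : v ≤ a
    · rw [Set.indicator_of_mem (show v ∈ Iic a from h),
        Set.indicator_of_mem (show μ * v ∈ Iic (μ * a) from mul_le_mul_of_nonneg_left h hμ.le)]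
    · rw [Set.indicator_of_notMem (show v ∉ Iic a from h),
        Set.indicator_of_notMem (show μ * v ∉ Iic (μ * a) from ?_)]
      simp only [mem_Iic, not_le] at h ⊢
      exact (mul_lt_mul_iff_right₀ hμ).2 h
  rw [this]
  exact (((integrable_indicator_iff measurableSet_Iic).2
    (integrableOn_exp_Iic (μ * a)))).comp_mul_left' hμ.ne'

lemma expInt_Iic (μ a : ℝ) (hμ : 0 < μ) :
    ∫ v in Iic a, Real.exp (μ * v) = Real.exp (μ * a) / μ := by
  have H : ∀ s : ℝ, HasDerivAt (fun v => Real.exp (μ * v) / μ) (Real.exp (μ * s)) s := by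
    intro s
    have h1 : HasDerivAt (fun v : ℝ => μ * v) μ s := by
      simpa using (hasDerivAt_id s).const_mul μ
    have := (h1.exp).div_const μ
    simpa [mul_comm, mul_div_assoc, mul_div_cancel_left₀ _ hμ.ne'] using this
  have hint : IntegrableOn (fun v => Real.exp (μ * v)) (Iic a) := expIntegrable_Iic μ a hμ
  have ht : Filter.Tendsto (fun v => Real.exp (μ * v) / μ) Filter.atBot (nhds 0) := by
    have : Filter.Tendsto (fun v : ℝ => μ * v) Filter.atBot Filter.atBot :=
      Filter.tendsto_atBot_atBot.2 fun b => ⟨b / μ, fun x hx => by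
        nlinarith [mul_le_mul_of_nonneg_left hx hμ.le, mul_div_cancel₀ b hμ.ne']⟩
    simpa using (Real.tendsto_exp_atBot.comp this).div_const μ
  have := MeasureTheory.integral_Iic_of_hasDerivAt_of_tendsto' (fun x _ => H x) hint ht
  rw [this]; ring

lemma expInt' (lam v a b : ℝ) (hl : lam ≠ 0) :
    ∫ s in a..b, Real.exp (-lam * (s - v))
      = (Real.exp (lam * v) * (Real.exp (-lam * b) - Real.exp (-lam * a))) / (-lam) := by
  have h1 : ∀ s : ℝ, Real.exp (-lam * (s - v)) = Real.exp (lam * v) * Real.exp (-lam * s) := by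
    intro s; rw [← Real.exp_add]; ring_nf
  rw [intervalIntegral.integral_congr (fun s _ => h1 s), intervalIntegral.integral_const_mul,
    expInt (-lam) a b (neg_ne_zero.2 hl)]
  ring

lemma kernel_eq_left {p : ℕ} (lam w : Fin p → ℝ) (δ : ℝ) (hδ : 0 < δ)
    (hpos : ∀ i, 0 < lam i) (h : ℕ) (v : ℝ) (hv : v ≤ (h : ℝ) * δ) :
    carmaIncrementKernel lam w δ h v
      = ∑ k : Fin p, w k / lam k * Real.exp (lam k * v)
          * (Real.exp (-lam k * ((h : ℝ) * δ)) - Real.exp (-lam k * (((h : ℝ) + 1) * δ))) := by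
  have hv' : v ≤ ((h : ℝ) + 1) * δ := le_trans hv (by nlinarith)
  rw [carmaIncrementKernel, if_pos hv', max_eq_right hv,
    intervalIntegral.integral_finset_sum]
  · refine Finset.sum_congr rfl fun k _ => ?_
    rw [intervalIntegral.integral_const_mul, expInt' (lam k) v _ _ (hpos k).ne']
    field_simp
    ring
  · intro k _
    exact (Continuous.intervalIntegrable (by continuity) _ _)

lemma kernel_zero_eq {p : ℕ} (lam w : Fin p → ℝ) (δ : ℝ)
    (hpos : ∀ i, 0 < lam i) (v : ℝ) (hv0 : 0 ≤ v) (hvδ : v ≤ δ) :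
    carmaIncrementKernel lam w δ 0 v
      = ∑ k : Fin p, w k / lam k * (1 - Real.exp (-lam k * (δ - v))) := by
  rw [carmaIncrementKernel]
  rw [if_pos (by push_cast; linarith : v ≤ (((0:ℕ) : ℝ) + 1) * δ)]
  push_cast
  rw [show ((0:ℝ) + 1) * δ = δ by ring, show (0:ℝ) * δ = 0 by ring, max_eq_left hv0,
    intervalIntegral.integral_finset_sum]
  · refine Finset.sum_congr rfl fun k _ => ?_
    rw [intervalIntegral.integral_const_mul, expInt' (lam k) v _ _ (hpos k).ne']
    have h1 : Real.exp (lam k * v) * Real.exp (-lam k * v) = 1 := by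
      rw [← Real.exp_add]; ring_nf; exact Real.exp_zero
    have h2 : Real.exp (lam k * v) * Real.exp (-lam k * δ) = Real.exp (-lam k * (δ - v)) := by
      rw [← Real.exp_add]; ring_nf
    ring_nf
    ring_nf at h1 h2
    linear_combination (w k * (lam k)⁻¹) * h1 - (w k * (lam k)⁻¹) * h2
  · intro k _
    exact (Continuous.intervalIntegrable (by continuity) _ _)

lemma intJ (li lj δ : ℝ) (hli : 0 < li) (hlj : 0 < lj) :
    ∫ v in (0:ℝ)..δ, (1 - Real.exp (-li * (δ - v))) * Real.exp (lj * v)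
      = (Real.exp (lj * δ) - 1) / lj
        - Real.exp (-li * δ) * (Real.exp ((li + lj) * δ) - 1) / (li + lj) := by
  have key : ∀ v : ℝ, (1 - Real.exp (-li * (δ - v))) * Real.exp (lj * v)
      = Real.exp (lj * v) - Real.exp (-li * δ) * Real.exp ((li + lj) * v) := by
    intro v
    have h : Real.exp (-li * (δ - v)) * Real.exp (lj * v)
        = Real.exp (-li * δ) * Real.exp ((li + lj) * v) := by
      rw [← Real.exp_add, ← Real.exp_add]; ring_nf
    nlinarith [h]
  rw [intervalIntegral.integral_congr (fun v _ => key v),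
    intervalIntegral.integral_sub
      ((Continuous.intervalIntegrable (by continuity) _ _))
      ((Continuous.intervalIntegrable (by continuity) _ _)),
    intervalIntegral.integral_const_mul, expInt lj 0 δ hlj.ne',
    expInt (li + lj) 0 δ (by positivity)]
  rw [mul_zero, mul_zero, Real.exp_zero]
  ring

lemma pair_identity (a b u v δ H : ℝ) (ha : 0 < a) (hb : 0 < b) :
    (u / a * (1 - Real.exp (-a * δ)))
        * (v / b * (Real.exp (-b * (H * δ)) - Real.exp (-b * ((H + 1) * δ))))
        / (a + b)
      + u / a
        * (v / b * (Real.exp (-b * (H * δ)) - Real.exp (-b * ((H + 1) * δ))))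
        * ((Real.exp (b * δ) - 1) / b
            - Real.exp (-a * δ) * (Real.exp ((a + b) * δ) - 1) / (a + b))
    = v * (u / (b + a)) * (b : ℝ) ^ (-2 : ℤ) * (Real.exp (-b * δ) - 1) ^ 2
        * Real.exp (-b * (H - 1) * δ) := by
  have hab : a + b ≠ 0 := by positivity
  have e1 : Real.exp (b * δ) = (Real.exp (-b * δ))⁻¹ := by
    rw [← Real.exp_neg]; ring_nf
  have e2 : Real.exp ((a + b) * δ) = (Real.exp (-a * δ))⁻¹ * (Real.exp (-b * δ))⁻¹ := by
    rw [← Real.exp_neg, ← Real.exp_neg, ← Real.exp_add]; ring_nf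
  have e3 : Real.exp (-b * (H * δ)) = Real.exp (-b * (H - 1) * δ) * Real.exp (-b * δ) := by
    rw [← Real.exp_add]; ring_nf
  have e4 : Real.exp (-b * ((H + 1) * δ))
      = Real.exp (-b * (H - 1) * δ) * Real.exp (-b * δ) * Real.exp (-b * δ) := by
    rw [← Real.exp_add, ← Real.exp_add]; ring_nf
  rw [e1, e2, e3, e4]
  have hX := Real.exp_ne_zero (-a * δ)
  have hY := Real.exp_ne_zero (-b * δ)
  have hT := Real.exp_ne_zero (-b * (H - 1) * δ)
  generalize Real.exp (-a * δ) = X at *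
  generalize Real.exp (-b * δ) = Y at *
  generalize Real.exp (-b * (H - 1) * δ) = T at *
  have h2 : (b : ℝ) ^ (-2 : ℤ) = (b ^ 2)⁻¹ := by
    rw [zpow_neg, zpow_two]; ring_nf
  rw [h2]
  field_simp
  ring


/-- Lag-h autocovariance of the increments of the integrated CARMA process: with
distinct positive rates `λ_i`, weights `w_i`, and `β_i = w_i Σ_j w_j/(λ_i + λ_j)`,
for every `h ≥ 1`,
`∫ G₀ G_h = Σ_i β_i λ_i^{−2} (e^{−λ_i δ} − 1)² e^{−λ_i (h−1) δ}`; consequently the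
lag-h autocovariance of `ΔY` equals `Var L(1)` times this quantity. -/
theorem integrated_CARMA_autocovariance (p : ℕ) (hp : 1 ≤ p) (lam w : Fin p → ℝ)
    (hpos : ∀ i, 0 < lam i) (hdist : Function.Injective lam) (δ : ℝ) (hδ : 0 < δ)
    (varL1 : ℝ) :
    ∀ h : ℕ, 1 ≤ h →
      ((∫ v : ℝ, carmaIncrementKernel lam w δ 0 v * carmaIncrementKernel lam w δ h v)
          = ∑ i : Fin p, (w i * ∑ j : Fin p, w j / (lam i + lam j)) * (lam i) ^ (-2 : ℤ)
              * (Real.exp (-lam i * δ) - 1) ^ 2 * Real.exp (-lam i * ((h : ℝ) - 1) * δ))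
      ∧ (varL1 * ∫ v : ℝ, carmaIncrementKernel lam w δ 0 v * carmaIncrementKernel lam w δ h v
          = varL1 * ∑ i : Fin p, (w i * ∑ j : Fin p, w j / (lam i + lam j))
              * (lam i) ^ (-2 : ℤ) * (Real.exp (-lam i * δ) - 1) ^ 2
              * Real.exp (-lam i * ((h : ℝ) - 1) * δ)) := by
  intro h hh
  have main : (∫ v : ℝ, carmaIncrementKernel lam w δ 0 v * carmaIncrementKernel lam w δ h v)
      = ∑ i : Fin p, (w i * ∑ j : Fin p, w j / (lam i + lam j)) * (lam i) ^ (-2 : ℤ)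
          * (Real.exp (-lam i * δ) - 1) ^ 2 * Real.exp (-lam i * ((h : ℝ) - 1) * δ) := by
    have hhr : (1 : ℝ) ≤ (h : ℝ) := by exact_mod_cast hh
    have hδh : δ ≤ (h : ℝ) * δ := by nlinarith
    set c : Fin p → ℝ := fun i => w i / lam i * (1 - Real.exp (-lam i * δ)) with hc
    set d : Fin p → ℝ := fun j => w j / lam j
        * (Real.exp (-lam j * ((h : ℝ) * δ)) - Real.exp (-lam j * (((h : ℝ) + 1) * δ))) with hd
    -- formula for G₀ on v ≤ 0
    have G0left : ∀ v : ℝ, v ≤ 0 → carmaIncrementKernel lam w δ 0 v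
        = ∑ i : Fin p, c i * Real.exp (lam i * v) := by
      intro v hv
      rw [kernel_eq_left lam w δ hδ hpos 0 v (by push_cast; nlinarith)]
      refine Finset.sum_congr rfl fun i _ => ?_
      push_cast
      rw [show -lam i * ((0:ℝ) * δ) = 0 by ring, Real.exp_zero, show ((0:ℝ) + 1) * δ = δ by ring,
        hc]
      ring
    -- formula for G_h on v ≤ h δ
    have Ghleft : ∀ v : ℝ, v ≤ (h : ℝ) * δ → carmaIncrementKernel lam w δ h v
        = ∑ j : Fin p, d j * Real.exp (lam j * v) := by
      intro v hv
      rw [kernel_eq_left lam w δ hδ hpos h v hv]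
      refine Finset.sum_congr rfl fun j _ => ?_
      rw [hd]; ring
    -- product formula on Iic 0
    have hg1 : EqOn (fun v => carmaIncrementKernel lam w δ 0 v * carmaIncrementKernel lam w δ h v)
        (fun v => ∑ i : Fin p, ∑ j : Fin p, (c i * d j) * Real.exp ((lam i + lam j) * v))
        (Iic 0) := by
      intro v hv
      simp only
      rw [G0left v hv, Ghleft v (le_trans hv (by positivity)), Finset.sum_mul_sum]
      refine Finset.sum_congr rfl fun i _ => Finset.sum_congr rfl fun j _ => ?_
      have : Real.exp (lam i * v) * Real.exp (lam j * v) = Real.exp ((lam i + lam j) * v) := by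
        rw [← Real.exp_add]; ring_nf
      linear_combination (c i * d j) * this
    have int_g1 : IntegrableOn
        (fun v => ∑ i : Fin p, ∑ j : Fin p, (c i * d j) * Real.exp ((lam i + lam j) * v))
        (Iic 0) := by
      apply MeasureTheory.integrable_finset_sum
      intro i _
      apply MeasureTheory.integrable_finset_sum
      intro j _
      exact (expIntegrable_Iic (lam i + lam j) 0
        (by have := hpos i; have := hpos j; positivity)).const_mul _
    have int1 : IntegrableOn
        (fun v => carmaIncrementKernel lam w δ 0 v * carmaIncrementKernel lam w δ h v)
        (Iic 0) := int_g1.congr_fun hg1.symm measurableSet_Iic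
    -- product formula on Icc 0 δ
    have hg2 : EqOn (fun v => carmaIncrementKernel lam w δ 0 v * carmaIncrementKernel lam w δ h v)
        (fun v => ∑ i : Fin p, ∑ j : Fin p, ((w i / lam i) * d j)
          * ((1 - Real.exp (-lam i * (δ - v))) * Real.exp (lam j * v)))
        (Icc 0 δ) := by
      intro v hv
      simp only
      rw [kernel_zero_eq lam w δ hpos v hv.1 hv.2, Ghleft v (le_trans hv.2 hδh),
        Finset.sum_mul_sum]
      refine Finset.sum_congr rfl fun i _ => Finset.sum_congr rfl fun j _ => ?_
      ring
    have cont_g2 : Continuous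
        (fun v => ∑ i : Fin p, ∑ j : Fin p, ((w i / lam i) * d j)
          * ((1 - Real.exp (-lam i * (δ - v))) * Real.exp (lam j * v))) := by
      apply continuous_finset_sum
      intro i _
      apply continuous_finset_sum
      intro j _
      fun_prop
    have int2 : IntegrableOn
        (fun v => carmaIncrementKernel lam w δ 0 v * carmaIncrementKernel lam w δ h v)
        (Ioc 0 δ) :=
      (cont_g2.integrableOn_Ioc).congr_fun
        (fun v hv => (hg2 (Ioc_subset_Icc_self hv)).symm) measurableSet_Ioc
    -- split the integral
    have h0 : ∀ v : ℝ, v ∉ Iic δ →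
        carmaIncrementKernel lam w δ 0 v * carmaIncrementKernel lam w δ h v = 0 := by
      intro v hv
      simp only [mem_Iic, not_le] at hv
      rw [carmaIncrementKernel]
      rw [if_neg (by push_cast; intro hcon; nlinarith)]
      exact zero_mul _
    have hsplit : (∫ v : ℝ, carmaIncrementKernel lam w δ 0 v * carmaIncrementKernel lam w δ h v)
        = (∫ v in Iic (0:ℝ),
            carmaIncrementKernel lam w δ 0 v * carmaIncrementKernel lam w δ h v)
          + ∫ v in Ioc (0:ℝ) δ,
              carmaIncrementKernel lam w δ 0 v * carmaIncrementKernel lam w δ h v := by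
      rw [← setIntegral_eq_integral_of_forall_compl_eq_zero h0,
        ← Iic_union_Ioc_eq_Iic hδ.le,
        setIntegral_union (Iic_disjoint_Ioc le_rfl) measurableSet_Ioc int1 int2]
    -- compute the Iic 0 part
    have compute1 : (∫ v in Iic (0:ℝ),
          carmaIncrementKernel lam w δ 0 v * carmaIncrementKernel lam w δ h v)
        = ∑ i : Fin p, ∑ j : Fin p, c i * d j / (lam i + lam j) := by
      rw [setIntegral_congr_fun measurableSet_Iic hg1]
      rw [MeasureTheory.integral_finset_sum _ (fun i _ =>
        MeasureTheory.integrable_finset_sum _ (fun j _ =>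
          (expIntegrable_Iic (lam i + lam j) 0
            (by have := hpos i; have := hpos j; positivity)).const_mul _))]
      refine Finset.sum_congr rfl fun i _ => ?_
      rw [MeasureTheory.integral_finset_sum _ (fun j _ =>
        (expIntegrable_Iic (lam i + lam j) 0
          (by have := hpos i; have := hpos j; positivity)).const_mul _)]
      refine Finset.sum_congr rfl fun j _ => ?_
      rw [MeasureTheory.integral_const_mul,
        expInt_Iic (lam i + lam j) 0 (by have := hpos i; have := hpos j; positivity),
        mul_zero, Real.exp_zero]
      ring
    -- compute the Ioc 0 δ part
    have compute2 : (∫ v in Ioc (0:ℝ) δ,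
          carmaIncrementKernel lam w δ 0 v * carmaIncrementKernel lam w δ h v)
        = ∑ i : Fin p, ∑ j : Fin p, ((w i / lam i) * d j)
            * ((Real.exp (lam j * δ) - 1) / lam j
              - Real.exp (-lam i * δ) * (Real.exp ((lam i + lam j) * δ) - 1)
                / (lam i + lam j)) := by
      rw [← intervalIntegral.integral_of_le hδ.le]
      rw [intervalIntegral.integral_congr (show EqOn _ _ (uIcc (0:ℝ) δ) from by
        rw [uIcc_of_le hδ.le]; exact hg2)]
      rw [intervalIntegral.integral_finset_sum (f := fun (i : Fin p) (x : ℝ) =>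
          ∑ j : Fin p, w i / lam i * d j
            * ((1 - Real.exp (-lam i * (δ - x))) * Real.exp (lam j * x)))
        (fun i _ => Continuous.intervalIntegrable
          (continuous_finset_sum _ (fun j _ => by fun_prop)) _ _)]
      refine Finset.sum_congr rfl fun i _ => ?_
      rw [intervalIntegral.integral_finset_sum (f := fun (j : Fin p) (x : ℝ) =>
          w i / lam i * d j * ((1 - Real.exp (-lam i * (δ - x))) * Real.exp (lam j * x)))
        (fun j _ => Continuous.intervalIntegrable (by fun_prop) _ _)]
      refine Finset.sum_congr rfl fun j _ => ?_
      rw [intervalIntegral.integral_const_mul, intJ (lam i) (lam j) δ (hpos i) (hpos j)]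
    rw [hsplit, compute1, compute2]
    simp only [← Finset.sum_add_distrib]
    rw [Finset.sum_comm]
    simp only [Finset.mul_sum, Finset.sum_mul]
    refine Finset.sum_congr rfl fun i _ => Finset.sum_congr rfl fun j _ => ?_
    simp only [hc, hd]
    exact pair_identity (lam j) (lam i) (w j) (w i) δ (h : ℝ) (hpos j) (hpos i)
  exact ⟨main, by rw [main]⟩
end

section
/- Let p ≥ 1 and let a(x) = x^p + a_1 x^{p−1} + … + a_p be a monic polynomial over ℂ whose roots α_1, …, α_p are pairwise distinct, with companion matrix A (the p×p matrix with ones on the superdiagonal, last row (−a_p, −a_{p−1}, …, −a_1), and zeros elsewhere). Let b(x) = b_0 + b_1 x + … + b_{p−1} x^{p−1} be a polynomial of degree at most p − 1 with coefficient vector b = (b_0, …, b_{p−1})ᵀ, and let e denote the p-th standard basis vector of ℂ^p. Then for every t ∈ ℂ, bᵀ exp(tA) e = Σ_{i=1}^p (b(α_i)/a′(α_i)) e^{α_i t}, where exp denotes the matrix exponential and a′ the derivative of a. -/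
open Polynomial

/-- The companion matrix of a monic polynomial `P` of degree `p`: ones on the
superdiagonal, last row given by the negated coefficients `(−P.coeff 0, …, −P.coeff (p−1))`
(i.e. `(−a_p, −a_{p−1}, …, −a_1)` when `P(x) = x^p + a_1 x^{p−1} + … + a_p`),
zeros elsewhere. -/
noncomputable def companionMatrixOf (p : ℕ) (P : Polynomial ℂ) :
    Matrix (Fin p) (Fin p) ℂ :=
  Matrix.of fun i j =>
    if (i : ℕ) = p - 1 then -P.coeff (j : ℕ)
    else if (j : ℕ) = (i : ℕ) + 1 then 1 else 0

/-!
The columns `(1, α_i, …, α_i^{p-1})` of the transposed Vandermonde matrix `V` are eigenvectors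
of the companion matrix, so `exp (t A) V = V diag (e^{α_i t})`. The Lagrange identity
`∑_i α_i^r / a'(α_i) = δ_{r, p-1}` for `r < p` says `V c = e` with `c_i = 1 / a'(α_i)`, and
`bᵀ V = (b(α_i))_i`; hence `bᵀ exp (t A) e = bᵀ V diag (e^{α_i t}) c = ∑_i b(α_i) e^{α_i t} / a'(α_i)`.
-/

open Matrix Finset

theorem Matrix.exp_mul_eq_mul_exp_of_mul_eq {m 𝔸 : Type*} [Fintype m] [DecidableEq m]
    [NormedCommRing 𝔸] [NormedAlgebra ℚ 𝔸] [CompleteSpace 𝔸]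
    {A V D : Matrix m m 𝔸} (hV : IsUnit V) (h : A * V = V * D) :
    NormedSpace.exp A * V = V * NormedSpace.exp D := by
  have hdet : IsUnit V.det := (isUnit_iff_isUnit_det V).mp hV
  have hA : A = V * D * V⁻¹ := by
    rw [← h, Matrix.mul_assoc, mul_nonsing_inv V hdet, Matrix.mul_one]
  rw [hA, exp_conj V D hV, Matrix.mul_assoc, nonsing_inv_mul V hdet, Matrix.mul_one]

theorem Matrix.exp_smul_diagonal {m : Type*} [Fintype m] [DecidableEq m] (t : ℂ) (v : m → ℂ) :
    NormedSpace.exp (t • diagonal v) = diagonal fun i => Complex.exp (v i * t) := by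
  rw [← diagonal_smul, exp_diagonal, Pi.exp_def]
  simp only [Pi.smul_apply, smul_eq_mul, mul_comm t, ← Complex.exp_eq_exp_ℂ]

theorem Matrix.vandermonde_mulVec_coeff {R : Type*} [CommRing R] {n : ℕ} (v : Fin n → R)
    {P : R[X]} (hP : P.natDegree < n) :
    vandermonde v *ᵥ (fun j : Fin n => P.coeff j) = fun i => P.eval (v i) := by
  funext i
  rw [eval_eq_sum_range' hP, ← Fin.sum_univ_eq_sum_range]
  simp only [mulVec, dotProduct, vandermonde_apply, mul_comm]

theorem Lagrange.eval_derivative_nodal_at_node {ι R : Type*} [CommRing R] [DecidableEq ι]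
    {s : Finset ι} {v : ι → R} {i : ι} (hi : i ∈ s) :
    (nodal s v).derivative.eval (v i) = ∏ j ∈ s.erase i, (v i - v j) := by
  rw [eval_nodal_derivative_eval_node_eq hi, eval_nodal]

/-- Compare the coefficients of `X ^ (#s - 1)` in the Lagrange interpolation of `X ^ r`. -/
theorem Lagrange.sum_pow_div_prod_sub {ι F : Type*} [Field F] [DecidableEq ι]
    {s : Finset ι} {v : ι → F} (hvs : Set.InjOn v s) {r : ℕ} (hr : r < #s) :
    ∑ i ∈ s, v i ^ r / ∏ j ∈ s.erase i, (v i - v j) = if r = #s - 1 then 1 else 0 := by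
  have hdeg : (X ^ r : F[X]).degree < #s := by
    rw [degree_X_pow]
    exact_mod_cast hr
  have hcoeff := coeff_eq_sum hvs hdeg
  simp only [eval_pow, eval_X, coeff_X_pow] at hcoeff
  rw [← hcoeff]
  exact if_congr eq_comm rfl rfl

theorem Matrix.vandermonde_transpose_mulVec_inv_prod_sub {F : Type*} [Field F] {p : ℕ}
    {α : Fin p → F} (hα : Function.Injective α) :
    (vandermonde α)ᵀ *ᵥ (fun i => (∏ j ∈ univ.erase i, (α i - α j))⁻¹) =
      fun r : Fin p => if (r : ℕ) = p - 1 then 1 else 0 := by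
  funext r
  simpa [mulVec, dotProduct, div_eq_mul_inv] using Lagrange.sum_pow_div_prod_sub hα.injOn
    (r.isLt.trans_eq (card_fin p).symm)

theorem companionMatrixOf_mulVec_powers {p : ℕ} {a : ℂ[X]} (hmonic : a.Monic)
    (hdeg : a.natDegree = p) {x : ℂ} (hx : a.IsRoot x) :
    companionMatrixOf p a *ᵥ (fun j : Fin p => x ^ (j : ℕ)) = x • fun j : Fin p => x ^ (j : ℕ) := by
  funext i
  simp only [mulVec, dotProduct, companionMatrixOf, of_apply, Pi.smul_apply, smul_eq_mul]
  by_cases hi : (i : ℕ) = p - 1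
  · have hsum : ∑ j : Fin p, a.coeff j * x ^ (j : ℕ) = -x ^ p := by
      have heval := eval_eq_sum_range (p := a) x
      rw [hdeg, sum_range_succ, ← hdeg, hmonic.coeff_natDegree, hdeg, hx.eq_zero,
        ← Fin.sum_univ_eq_sum_range (fun k => a.coeff k * x ^ k)] at heval
      linear_combination -heval
    simp only [hi, if_true, neg_mul, sum_neg_distrib, hsum, neg_neg, ← pow_succ']
    congr 1
    omega
  · have hi1 : (i : ℕ) + 1 < p := by omega
    simp only [hi, if_false, ite_mul, one_mul, zero_mul]
    rw [sum_eq_single ⟨(i : ℕ) + 1, hi1⟩ (fun j _ hj => if_neg fun h => hj (Fin.ext h))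
      (fun h => absurd (mem_univ _) h), if_pos rfl, pow_succ']

theorem companionMatrixOf_mul_vandermonde_transpose {p : ℕ} {a : ℂ[X]} (hmonic : a.Monic)
    (hdeg : a.natDegree = p) {α : Fin p → ℂ} (hroot : ∀ i, a.IsRoot (α i)) :
    companionMatrixOf p a * (vandermonde α)ᵀ = (vandermonde α)ᵀ * diagonal α := by
  ext i j
  rw [mul_diagonal, transpose_apply, vandermonde_apply, mul_comm]
  exact congrFun (companionMatrixOf_mulVec_powers hmonic hdeg (hroot j)) i

/-- Spectral expansion of the CARMA kernel: if `a(x) = Π_i (x − α_i)` is monic of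
degree `p` with pairwise distinct roots `α_i`, `A` is its companion matrix, `b` is a
polynomial of degree at most `p − 1` with coefficient vector `b`, and `e` is the
`p`-th standard basis vector, then for every `t ∈ ℂ`,
`bᵀ exp(tA) e = Σ_i (b(α_i)/a′(α_i)) e^{α_i t}`. -/
theorem carma_spectral_expansion (p : ℕ) (hp : 1 ≤ p) (α : Fin p → ℂ)
    (hdist : Function.Injective α)
    (a : Polynomial ℂ) (ha : a = ∏ i : Fin p, (X - C (α i)))
    (b : Polynomial ℂ) (hb : b.natDegree ≤ p - 1)
    (A : Matrix (Fin p) (Fin p) ℂ) (hA : A = companionMatrixOf p a)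
    (bvec : Fin p → ℂ) (hbvec : ∀ j, bvec j = b.coeff (j : ℕ))
    (e : Fin p → ℂ) (he : ∀ j, e j = if (j : ℕ) = p - 1 then 1 else 0) :
    ∀ t : ℂ,
      dotProduct bvec ((NormedSpace.exp (t • A)).mulVec e)
        = ∑ i : Fin p, b.eval (α i) / a.derivative.eval (α i) * Complex.exp (α i * t) := by
  intro t
  obtain rfl : a = Lagrange.nodal univ α := ha.trans (Lagrange.nodal_eq _ _).symm
  set V := (vandermonde α)ᵀ
  have hAV : A * V = V * diagonal α := hA ▸ companionMatrixOf_mul_vandermonde_transpose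
    Lagrange.nodal_monic (by rw [Lagrange.natDegree_nodal, card_fin])
    fun i => Lagrange.eval_nodal_at_node (mem_univ i)
  have hV : IsUnit V := by
    rw [isUnit_iff_isUnit_det, det_transpose, isUnit_iff_ne_zero]
    exact det_vandermonde_ne_zero_iff.mpr hdist
  have hexp : NormedSpace.exp (t • A) * V = V * diagonal fun i => Complex.exp (α i * t) := by
    rw [← exp_smul_diagonal]
    exact exp_mul_eq_mul_exp_of_mul_eq hV (by rw [Matrix.smul_mul, Matrix.mul_smul, hAV])
  have hVc : V *ᵥ (fun i => ((Lagrange.nodal univ α).derivative.eval (α i))⁻¹) = e := by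
    simp only [Lagrange.eval_derivative_nodal_at_node (mem_univ _)]
    exact (vandermonde_transpose_mulVec_inv_prod_sub hdist).trans (funext fun j => (he j).symm)
  have hbV : bvec ᵥ* V = fun i => b.eval (α i) := by
    rw [vecMul_transpose, show bvec = fun j : Fin p => b.coeff j from funext hbvec]
    exact vandermonde_mulVec_coeff α (by omega)
  rw [← hVc, mulVec_mulVec, hexp, ← mulVec_mulVec, dotProduct_mulVec, hbV]
  simp only [dotProduct, mulVec_diagonal, div_eq_mul_inv]
  exact sum_congr rfl fun i _ => by ring
end

section
/- For every λ > 0, the denominator D(λ) = 1 − 2λe^{−λ} − e^{−2λ} is strictly positive, and the quantity r(λ) = (1 − λ − e^{−2λ}(1 + λ)) / (1 − 2λe^{−λ} − e^{−2λ}) satisfies r(λ) < −1. Consequently r(λ)² − 1 > 0, so θ(λ) = −r(λ) − √(r(λ)² − 1) is a well-defined real number, and θ(λ) ∈ (0, 1). -/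
/-- The denominator appearing in the implied ARMA(1,1) map of the integrated
OU model. -/
noncomputable def armaDenom (lam : ℝ) : ℝ :=
  1 - 2 * lam * Real.exp (-lam) - Real.exp (-2 * lam)

/-- The ratio `r(λ)` of the implied ARMA(1,1) map. -/
noncomputable def armaR (lam : ℝ) : ℝ :=
  (1 - lam - Real.exp (-2 * lam) * (1 + lam)) / armaDenom lam

/-- The moving-average parameter `θ(λ) = −r(λ) − √(r(λ)² − 1)`. -/
noncomputable def armaTheta (lam : ℝ) : ℝ :=
  -armaR lam - Real.sqrt (armaR lam ^ 2 - 1)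

/-!
Write `x = e^{-λ}`. Then `D(λ) = 2x (sinh λ - λ) > 0`, and
`(r(λ) + 1) D(λ) = (1 + x) (2 (1 - x) - λ (1 + x))` is negative because
`(1 - x) / (1 + x) = tanh (λ/2) < λ/2`. Once `r < -1`, the square root `√(r² - 1)` lies strictly
between `-r - 1` and `-r`, which puts `θ = -r - √(r² - 1)` in `(0, 1)`.
-/

open Real

theorem sinh_lt_mul_cosh {t : ℝ} (ht : 0 < t) : sinh t < t * cosh t := by
  have hderiv (s : ℝ) : HasDerivAt (fun s => s * cosh s - sinh s) (s * sinh s) s := by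
    refine (((hasDerivAt_id' s).mul (hasDerivAt_cosh s)).sub (hasDerivAt_sinh s)).congr_deriv ?_
    ring
  have hmono : StrictMonoOn (fun s => s * cosh s - sinh s) (Set.Ici 0) := by
    refine strictMonoOn_of_deriv_pos (convex_Ici 0) (by fun_prop) fun s hs => ?_
    rw [interior_Ici, Set.mem_Ioi] at hs
    rw [(hderiv s).deriv]
    exact mul_pos hs (sinh_pos_iff.mpr hs)
  simpa using hmono Set.self_mem_Ici ht.le ht

theorem two_mul_one_sub_exp_neg_lt {lam : ℝ} (hlam : 0 < lam) :
    2 * (1 - exp (-lam)) < lam * (1 + exp (-lam)) := by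
  have h := sinh_lt_mul_cosh (half_pos hlam)
  rw [sinh_eq, cosh_eq] at h
  have hy : 0 < exp (-(lam / 2)) := exp_pos _
  have hsq : exp (-lam) = exp (-(lam / 2)) ^ 2 := by rw [← exp_nat_mul]; ring_nf
  have hinv : exp (lam / 2) * exp (-(lam / 2)) = 1 := by rw [← exp_add]; simp
  rw [hsq]
  nlinarith [mul_lt_mul_of_pos_right h hy]

theorem armaDenom_eq_mul_sinh_sub (lam : ℝ) :
    armaDenom lam = 2 * exp (-lam) * (sinh lam - lam) := by
  have hinv : exp lam * exp (-lam) = 1 := by rw [← exp_add]; simp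
  rw [armaDenom, sinh_eq, show -2 * lam = -lam + -lam by ring, exp_add]
  linear_combination -hinv

theorem armaDenom_pos {lam : ℝ} (hlam : 0 < lam) : 0 < armaDenom lam := by
  rw [armaDenom_eq_mul_sinh_sub]
  have := self_lt_sinh_iff.mpr hlam
  positivity

theorem armaR_add_one_mul_armaDenom {lam : ℝ} (hD : armaDenom lam ≠ 0) :
    (armaR lam + 1) * armaDenom lam =
      (1 + exp (-lam)) * (2 * (1 - exp (-lam)) - lam * (1 + exp (-lam))) := by
  rw [armaR, add_mul, div_mul_cancel₀ _ hD, armaDenom,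
    show -2 * lam = -lam + -lam by ring, exp_add]
  ring

theorem armaR_lt_neg_one {lam : ℝ} (hlam : 0 < lam) : armaR lam < -1 := by
  have hD := armaDenom_pos hlam
  have hprod : (armaR lam + 1) * armaDenom lam < 0 := by
    rw [armaR_add_one_mul_armaDenom hD.ne']
    exact mul_neg_of_pos_of_neg (by positivity)
      (sub_neg.mpr (two_mul_one_sub_exp_neg_lt hlam))
  linarith [neg_of_mul_neg_left hprod hD.le]

theorem neg_sub_sqrt_sq_sub_one_mem_Ioo {r : ℝ} (hr : r < -1) :
    -r - √(r ^ 2 - 1) ∈ Set.Ioo 0 1 := by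
  have hlt : √(r ^ 2 - 1) < -r := (sqrt_lt' (by linarith)).mpr (by nlinarith)
  have hgt : -r - 1 < √(r ^ 2 - 1) := (lt_sqrt (by linarith)).mpr (by nlinarith)
  constructor <;> linarith

/-- For every `λ > 0`, the denominator `D(λ) = 1 − 2λe^{−λ} − e^{−2λ}` is strictly
positive, `r(λ) = (1 − λ − e^{−2λ}(1 + λ))/D(λ)` satisfies `r(λ) < −1`, consequently
`r(λ)² − 1 > 0` so that `θ(λ) = −r(λ) − √(r(λ)² − 1)` is a well-defined real number,
and `θ(λ) ∈ (0, 1)`. -/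
theorem arma_theta_wellDefined (lam : ℝ) (hlam : 0 < lam) :
    0 < armaDenom lam ∧ armaR lam < -1 ∧ 0 < armaR lam ^ 2 - 1 ∧
      armaTheta lam ∈ Set.Ioo (0 : ℝ) 1 := by
  have hr := armaR_lt_neg_one hlam
  exact ⟨armaDenom_pos hlam, hr, by nlinarith, neg_sub_sqrt_sq_sub_one_mem_Ioo hr⟩
end

section
/- Let λ > 0, set φ = e^{−λ}, r = (1 − λ − e^{−2λ}(1+λ)) / (1 − 2λe^{−λ} − e^{−2λ}), and θ = −r − √(r² − 1). Then (φ + θ)(1 + φθ) / (1 + 2φθ + θ²) = (1 − e^{−λ})² / (2(e^{−λ} + λ − 1)). In other words, the lag-1 autocorrelation of the ARMA(1,1) process with autoregressive parameter φ and moving-average parameter θ equals the lag-1 autocorrelation of the increments (over unit intervals) of the integrated Ornstein–Uhlenbeck process with mean-reversion rate λ. -/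
/-!
Since `θ = -r - √(r² - 1)` is a root of `θ² + 2rθ + 1`, we have `1 + θ² = -2rθ`, and a factor `θ`
cancels from the ARMA(1,1) autocorrelation, leaving `(1 + φ² - 2rφ) / (2(φ - r))`. Writing
`r = N / D`, both `D(1 + φ² - 2rφ) = (1 - φ²)(1 - φ)²` and `D(φ - r) = (1 - φ²)(φ + λ - 1)` hold
identically in `φ` and `λ`, so the common factor `(1 - φ²) / D` cancels as well. The root is real
because `r < -1`, which for `φ = e^{-λ}` is the inequality `tanh(λ/2) < λ/2`, while `D > 0` is
`sinh λ > λ`.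
-/

open Real Set

theorem two_mul_one_sub_exp_neg_lt_mul_one_add_exp_neg {t : ℝ} (ht : 0 < t) :
    2 * (1 - exp (-t)) < t * (1 + exp (-t)) := by
  let g : ℝ → ℝ := fun s ↦ s * (1 + exp (-s)) - 2 * (1 - exp (-s))
  have hg : ∀ s, HasDerivAt g (1 - (1 + s) * exp (-s)) s := by
    intro s
    have he := (hasDerivAt_neg s).exp
    exact (((hasDerivAt_id' s).mul (he.const_add 1)).sub
      ((he.const_sub 1).const_mul 2)).congr_deriv (by ring)
  have hmono : StrictMonoOn g (Ici 0) := by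
    refine strictMonoOn_of_deriv_pos (convex_Ici 0)
      (fun s _ ↦ (hg s).continuousAt.continuousWithinAt) fun s hs ↦ ?_
    rw [interior_Ici] at hs
    rw [(hg s).deriv, sub_pos, ← lt_div_iff₀ (exp_pos _), exp_neg, div_inv_eq_mul, one_mul]
    linarith [add_one_lt_exp hs.ne']
  have := hmono self_mem_Ici ht.le ht
  simp only [g, neg_zero, exp_zero] at this
  linarith

theorem one_sub_two_mul_mul_exp_neg_sub_exp_neg_sq_pos {t : ℝ} (ht : 0 < t) :
    0 < 1 - 2 * t * exp (-t) - exp (-t) ^ 2 := by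
  have hsinh : 0 < exp t - exp (-t) - 2 * t := by
    linarith [self_lt_sinh_iff.mpr ht, sinh_eq t]
  have h1 : exp (-t) * exp t = 1 := by rw [← exp_add, neg_add_cancel, exp_zero]
  have := mul_pos (exp_pos (-t)) hsinh
  linear_combination this + h1

theorem arma_lag1_eq_of_sq_add_two_mul_mul_add_one_eq_zero {K : Type*} [Field K] {φ r θ : K}
    (hθ : θ ^ 2 + 2 * r * θ + 1 = 0) :
    (φ + θ) * (1 + φ * θ) / (1 + 2 * φ * θ + θ ^ 2)
      = (1 + φ ^ 2 - 2 * r * φ) / (2 * (φ - r)) := by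
  have hθ0 : θ ≠ 0 := by rintro rfl; simp at hθ
  have hnum : (φ + θ) * (1 + φ * θ) = θ * (1 + φ ^ 2 - 2 * r * φ) := by
    linear_combination φ * hθ
  have hden : 1 + 2 * φ * θ + θ ^ 2 = θ * (2 * (φ - r)) := by
    linear_combination hθ
  rw [hnum, hden, mul_div_mul_left _ _ hθ0]

theorem sq_add_two_mul_mul_add_one_eq_zero_of_eq_neg_sub_sqrt {r θ : ℝ} (hr : 1 ≤ r ^ 2)
    (hθ : θ = -r - √(r ^ 2 - 1)) : θ ^ 2 + 2 * r * θ + 1 = 0 := by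
  have hs := sq_sqrt (sub_nonneg.mpr hr)
  rw [hθ]
  linear_combination hs

theorem div_lt_neg_one_of_two_mul_one_sub_lt {l x : ℝ} (hx : -1 < x)
    (hD : 0 < 1 - 2 * l * x - x ^ 2) (h : 2 * (1 - x) < l * (1 + x)) :
    (1 - l - x ^ 2 * (1 + l)) / (1 - 2 * l * x - x ^ 2) < -1 := by
  rw [div_lt_iff₀ hD]
  nlinarith [mul_pos (neg_lt_iff_pos_add'.mp hx) (sub_pos.mpr h)]

theorem one_add_sq_sub_two_mul_mul_div_eq_of_eq_div {K : Type*} [Field K] {l x r : K}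
    (hD : 1 - 2 * l * x - x ^ 2 ≠ 0) (hx : x ^ 2 ≠ 1)
    (hr : r = (1 - l - x ^ 2 * (1 + l)) / (1 - 2 * l * x - x ^ 2)) :
    (1 + x ^ 2 - 2 * r * x) / (2 * (x - r)) = (1 - x) ^ 2 / (2 * (x + l - 1)) := by
  have hrD : r * (1 - 2 * l * x - x ^ 2) = 1 - l - x ^ 2 * (1 + l) := by
    rw [hr, div_mul_cancel₀ _ hD]
  have hnum : 1 + x ^ 2 - 2 * r * x = (1 - x ^ 2) * (1 - x) ^ 2 / (1 - 2 * l * x - x ^ 2) := by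
    rw [eq_div_iff hD]; linear_combination (-2 * x) * hrD
  have hden : x - r = (1 - x ^ 2) * (x + l - 1) / (1 - 2 * l * x - x ^ 2) := by
    rw [eq_div_iff hD]; linear_combination (-1) * hrD
  rw [hnum, hden, mul_div_assoc', div_div_div_cancel_right₀ hD, mul_left_comm,
    mul_div_mul_left _ _ (sub_ne_zero.mpr hx.symm)]

/-- Autocovariance matching of the implied ARMA(1,1) representation: for `λ > 0`,
with `φ = e^{−λ}`, `r = (1 − λ − e^{−2λ}(1+λ))/(1 − 2λe^{−λ} − e^{−2λ})` and
`θ = −r − √(r² − 1)`, the lag-1 autocorrelation of the ARMA(1,1) process,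
`(φ + θ)(1 + φθ)/(1 + 2φθ + θ²)`, equals the lag-1 autocorrelation
`(1 − e^{−λ})²/(2(e^{−λ} + λ − 1))` of the unit-interval increments of the
integrated Ornstein–Uhlenbeck process with mean-reversion rate `λ`. -/
theorem implied_arma_lag1_autocorrelation (lam : ℝ) (hlam : 0 < lam)
    (φ r θ : ℝ) (hφ : φ = Real.exp (-lam))
    (hr : r = (1 - lam - Real.exp (-2 * lam) * (1 + lam))
        / (1 - 2 * lam * Real.exp (-lam) - Real.exp (-2 * lam)))
    (hθ : θ = -r - Real.sqrt (r ^ 2 - 1)) :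
    (φ + θ) * (1 + φ * θ) / (1 + 2 * φ * θ + θ ^ 2)
      = (1 - Real.exp (-lam)) ^ 2 / (2 * (Real.exp (-lam) + lam - 1)) := by
  have hexp2 : exp (-2 * lam) = exp (-lam) ^ 2 := by rw [← exp_nat_mul]; ring_nf
  rw [hexp2] at hr
  have hD := one_sub_two_mul_mul_exp_neg_sub_exp_neg_sq_pos hlam
  have hr1 : r < -1 := hr ▸ div_lt_neg_one_of_two_mul_one_sub_lt
    (by linarith [exp_pos (-lam)]) hD (two_mul_one_sub_exp_neg_lt_mul_one_add_exp_neg hlam)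
  have hquad := sq_add_two_mul_mul_add_one_eq_zero_of_eq_neg_sub_sqrt (by nlinarith) hθ
  have hx : exp (-lam) ^ 2 ≠ 1 :=
    (pow_lt_one₀ (exp_pos _).le (exp_lt_one_iff.mpr (neg_lt_zero.mpr hlam)) two_ne_zero).ne
  rw [arma_lag1_eq_of_sq_add_two_mul_mul_add_one_eq_zero hquad, hφ]
  exact one_add_sq_sub_two_mul_mul_div_eq_of_eq_div hD.ne' hx hr
end
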